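/- Under the setting of the C¹-reconstruction V̂ of a degree-p polynomial V on an interval I_n of length τ_n with derivative jump J at t_{n-1}, the following exact identity holds: ‖(V - V̂)'‖_{L²(I_n;X)}² = τ_n · (p / ((2p-1)(2p+1))) · ‖J‖_X². -/

import Mathlib

/-!
With `p = n + 1`, the error `E = V' - V̂'` is a polynomial of degree `≤ n + 1` with `E(a) = J` and
`∫ ⟪E', q⟫ = -⟪J, q(a)⟫` for every `q` of degree `≤ n`. With `F = (X - a)^n (X - b)^(n+1)`,
the polynomial `g = D^n F / (n! (a - b)^(n+1))` satisfies `g(a) = 1`, `g(b) = 0` and, by repeated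
integration by parts, `g ⟂ ℝ[X]_{<n}`; hence `∫ r g' = -r(a)` for `deg r ≤ n`.
So `D = E' - g' J` has degree `≤ n` and `∫ ‖D‖² = ∫ ⟪E', D⟫ - ∫ g' ⟪J, D⟫ = 0`, whence `E = g J`.
Integrating by parts `n` more times, `∫ g²` becomes `∫ F · D^(2n) F` with `D^(2n) F` linear, a
combination of two Beta integrals, and equals `(b - a)(n + 1)/((2n + 1)(2n + 3))`.
-/

open MeasureTheory

/-- `f : ℝ → X` is a polynomial of degree at most `p` with values in `X`. -/
def IsPolyDeg {X : Type*} [AddCommMonoid X] [Module ℝ X] (p : ℕ) (f : ℝ → X) : Prop :=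
  ∃ c : ℕ → X, ∀ t : ℝ, f t = ∑ k ∈ Finset.range (p + 1), t ^ k • c k

open Polynomial Set
open scoped Nat InnerProductSpace

namespace Polynomial

theorem intervalIntegral_mul_derivative (f g : ℝ[X]) (a b : ℝ) :
    ∫ t in a..b, f.eval t * g.derivative.eval t
      = f.eval b * g.eval b - f.eval a * g.eval a - ∫ t in a..b, f.derivative.eval t * g.eval t :=
  intervalIntegral.integral_mul_deriv_eq_deriv_mul (fun t _ => f.hasDerivAt t)
    (fun t _ => g.hasDerivAt t) (f.derivative.continuous.intervalIntegrable a b)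
    (g.derivative.continuous.intervalIntegrable a b)

theorem intervalIntegral_mul_iterate_derivative {a b : ℝ} {k : ℕ} {f : ℝ[X]}
    (ha : ∀ j < k, (derivative^[j] f).eval a = 0) (hb : ∀ j < k, (derivative^[j] f).eval b = 0)
    (r : ℝ[X]) :
    ∫ t in a..b, r.eval t * (derivative^[k] f).eval t
      = (-1) ^ k * ∫ t in a..b, (derivative^[k] r).eval t * f.eval t := by
  induction k generalizing r with
  | zero => simp
  | succ k ih =>
    rw [Function.iterate_succ_apply', intervalIntegral_mul_derivative, ha k k.lt_succ_self,
      hb k k.lt_succ_self, ih (fun j hj => ha j (by omega)) (fun j hj => hb j (by omega)),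
      ← Function.iterate_succ_apply]
    ring

theorem iterate_derivative_eq_of_natDegree_le_succ {p : ℝ[X]} {k : ℕ}
    (hp : p.natDegree ≤ k + 1) :
    derivative^[k] p = C ((k + 1)! * p.coeff (k + 1)) * X + C (k ! * p.coeff k) := by
  ext (_ | _ | m)
  · simp [coeff_iterate_derivative, Nat.descFactorial_self]
  · have : (k + 1).descFactorial k = (k + 1)! := by
      simpa using Nat.factorial_mul_descFactorial (n := k + 1) (k := k) (by omega)
    simp [coeff_iterate_derivative, add_comm 1 k, this]
  · simp [coeff_iterate_derivative,
      coeff_eq_zero_of_natDegree_lt (show p.natDegree < m + 2 + k by omega)]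

end Polynomial

theorem integral_sub_pow_mul_sub_pow_succ (a b : ℝ) (m k : ℕ) :
    (m + 1) * ∫ t in a..b, (t - a) ^ m * (b - t) ^ (k + 1)
      = (k + 1) * ∫ t in a..b, (t - a) ^ (m + 1) * (b - t) ^ k := by
  have hu : ∀ t ∈ uIcc a b, HasDerivAt (fun t => (t - a) ^ (m + 1)) ((m + 1) * (t - a) ^ m) t :=
    fun t _ => by simpa using ((hasDerivAt_id t).sub_const a).fun_pow (m + 1)
  have hv : ∀ t ∈ uIcc a b,
      HasDerivAt (fun t => (b - t) ^ (k + 1)) (-((k + 1) * (b - t) ^ k)) t :=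
    fun t _ => by simpa using ((hasDerivAt_id t).const_sub b).fun_pow (k + 1)
  have hparts := intervalIntegral.integral_deriv_mul_eq_sub hu hv
    (Continuous.intervalIntegrable (by fun_prop) _ _)
    (Continuous.intervalIntegrable (by fun_prop) _ _)
  simp only [sub_self, ne_eq, Nat.add_one_ne_zero, not_false_eq_true, zero_pow, mul_zero,
    zero_mul] at hparts
  rw [← intervalIntegral.integral_const_mul, ← intervalIntegral.integral_const_mul,
    ← sub_eq_zero, ← intervalIntegral.integral_sub
    (Continuous.intervalIntegrable (by fun_prop) _ _)
    (Continuous.intervalIntegrable (by fun_prop) _ _), ← hparts]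
  congr 1; ext t; ring

theorem integral_sub_pow_mul_sub_pow (a b : ℝ) (m k : ℕ) :
    ∫ t in a..b, (t - a) ^ m * (b - t) ^ k
      = m ! * k ! / (m + k + 1)! * (b - a) ^ (m + k + 1) := by
  induction k generalizing m with
  | zero =>
    simp only [pow_zero, mul_one, Nat.factorial_zero, Nat.cast_one, add_zero]
    rw [intervalIntegral.integral_comp_sub_right (· ^ m), integral_pow, sub_self,
      zero_pow m.succ_ne_zero, sub_zero, Nat.factorial_succ]
    push_cast
    field_simp
  | succ k ih =>
    have hrec := integral_sub_pow_mul_sub_pow_succ a b m k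
    rw [ih, show m + 1 + k + 1 = m + (k + 1) + 1 by omega] at hrec
    rw [← mul_right_inj' (show (m : ℝ) + 1 ≠ 0 by positivity), hrec]
    push_cast [Nat.factorial_succ]
    ring

namespace IsPolyDeg
variable {X Y : Type*}

section Module
variable [AddCommGroup X] [Module ℝ X] [AddCommGroup Y] [Module ℝ Y] {n : ℕ} {f g : ℝ → X}

theorem mono {m : ℕ} (h : IsPolyDeg m f) (hmn : m ≤ n) : IsPolyDeg n f := by
  obtain ⟨c, hc⟩ := h
  refine ⟨fun k => if k ≤ m then c k else 0, fun t => ?_⟩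
  rw [hc, ← Finset.sum_subset (Finset.range_subset_range.mpr (by omega : m + 1 ≤ n + 1))]
  · exact Finset.sum_congr rfl fun k hk => by
      simp [Nat.lt_succ_iff.mp (Finset.mem_range.mp hk)]
  · intro k _ hk
    simp [show ¬k ≤ m by simpa [Nat.lt_succ_iff] using hk]

theorem sub (hf : IsPolyDeg n f) (hg : IsPolyDeg n g) : IsPolyDeg n (fun t => f t - g t) := by
  obtain ⟨c, hc⟩ := hf
  obtain ⟨d, hd⟩ := hg
  exact ⟨fun k => c k - d k, fun t => by simp only [hc, hd, smul_sub, Finset.sum_sub_distrib]⟩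

theorem map (ℓ : X →ₗ[ℝ] Y) (hf : IsPolyDeg n f) : IsPolyDeg n (fun t => ℓ (f t)) := by
  obtain ⟨c, hc⟩ := hf
  exact ⟨fun k => ℓ (c k), fun t => by simp only [hc, map_sum, map_smul]⟩

end Module

theorem exists_polynomial {n : ℕ} {f : ℝ → ℝ} (hf : IsPolyDeg n f) :
    ∃ r : ℝ[X], r.natDegree ≤ n ∧ ∀ t, r.eval t = f t := by
  obtain ⟨c, hc⟩ := hf
  refine ⟨∑ k ∈ Finset.range (n + 1), C (c k) * X ^ k, ?_, fun t => ?_⟩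
  · refine natDegree_sum_le_of_forall_le _ _ fun k hk => (natDegree_C_mul_X_pow_le _ _).trans ?_
    exact Nat.lt_succ_iff.mp (Finset.mem_range.mp hk)
  · simp only [hc, eval_finsetSum, eval_mul, eval_C, eval_pow, eval_X, smul_eq_mul, mul_comm]

section Normed
variable [NormedAddCommGroup X] [NormedSpace ℝ X] {n : ℕ} {f f' : ℝ → X}

theorem continuous (hf : IsPolyDeg n f) : Continuous f := by
  obtain ⟨c, hc⟩ := hf
  rw [funext hc]
  fun_prop

theorem of_hasDerivAt (hf : IsPolyDeg (n + 1) f) (hf' : ∀ t, HasDerivAt f (f' t) t) :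
    IsPolyDeg n f' := by
  obtain ⟨c, hc⟩ := hf
  refine ⟨fun k => ((k + 1 : ℕ) : ℝ) • c (k + 1), fun t => ?_⟩
  have hsum : HasDerivAt f
      (∑ k ∈ Finset.range (n + 1 + 1), ((k : ℝ) * t ^ (k - 1)) • c k) t := by
    rw [funext hc]
    exact HasDerivAt.fun_sum fun k _ => (hasDerivAt_pow k t).smul_const (c k)
  rw [(hf' t).unique hsum, Finset.sum_range_succ']
  simp [smul_smul, mul_comm]

end Normed
end IsPolyDeg

theorem Polynomial.isPolyDeg_eval_smul {X : Type*} [AddCommGroup X] [Module ℝ X] {n : ℕ}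
    {q : ℝ[X]} (hq : q.natDegree ≤ n) (v : X) : IsPolyDeg n (fun t => q.eval t • v) := by
  refine ⟨fun k => q.coeff k • v, fun t => ?_⟩
  dsimp only
  rw [eval_eq_sum_range' (Nat.lt_succ_of_le hq), Finset.sum_smul]
  simp only [smul_smul, mul_comm]

noncomputable def rodriguesFactor (a b : ℝ) (n : ℕ) : ℝ[X] :=
  (X - C a) ^ n * (X - C b) ^ (n + 1)

/-- Up to sign, half the difference of the shifted Legendre polynomials of degrees `n + 1` and `n`
on `[a, b]`. -/
noncomputable def jumpLift (a b : ℝ) (n : ℕ) : ℝ[X] :=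
  C (n ! * (a - b) ^ (n + 1))⁻¹ * derivative^[n] (rodriguesFactor a b n)

namespace rodriguesFactor
variable (a b : ℝ) (n : ℕ)

theorem eval_iterate_derivative_left_of_lt {j : ℕ} (hj : j < n) :
    (derivative^[j] (rodriguesFactor a b n)).eval a = 0 := by
  simpa using aeval_iterate_derivative_of_lt (rodriguesFactor a b n) n a
    (p' := (X - C b) ^ (n + 1)) (by simp [rodriguesFactor]) hj

theorem eval_iterate_derivative_right_of_lt {j : ℕ} (hj : j < n + 1) :
    (derivative^[j] (rodriguesFactor a b n)).eval b = 0 := by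
  simpa using aeval_iterate_derivative_of_lt (rodriguesFactor a b n) (n + 1) b
    (p' := (X - C a) ^ n) (by simp [rodriguesFactor, mul_comm]) hj

theorem eval_iterate_derivative_left :
    (derivative^[n] (rodriguesFactor a b n)).eval a = n ! * (a - b) ^ (n + 1) := by
  rw [← coe_aeval_eq_eval, aeval_iterate_derivative_self (rodriguesFactor a b n) n a
    (p' := (X - C b) ^ (n + 1)) (by simp [rodriguesFactor])]
  simp

theorem monic : (rodriguesFactor a b n).Monic :=
  ((monic_X_sub_C a).pow n).mul ((monic_X_sub_C b).pow (n + 1))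

theorem natDegree_eq : (rodriguesFactor a b n).natDegree = 2 * n + 1 := by
  rw [rodriguesFactor, ((monic_X_sub_C a).pow n).natDegree_mul ((monic_X_sub_C b).pow (n + 1))]
  simp only [natDegree_pow, natDegree_X_sub_C]
  ring

theorem nextCoeff_eq : (rodriguesFactor a b n).nextCoeff = -(n * a + (n + 1) * b) := by
  rw [rodriguesFactor, ((monic_X_sub_C a).pow n).nextCoeff_mul ((monic_X_sub_C b).pow (n + 1)),
    (monic_X_sub_C a).nextCoeff_pow, (monic_X_sub_C b).nextCoeff_pow]
  simp only [nextCoeff_X_sub_C, nsmul_eq_mul]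
  push_cast
  ring

theorem iterate_derivative_two_mul :
    derivative^[2 * n] (rodriguesFactor a b n)
      = C ((2 * n)! : ℝ) * (C ((n : ℝ) + 1) * (X - C b) + C (n : ℝ) * (X - C a)) := by
  have hlead : (rodriguesFactor a b n).coeff (2 * n + 1) = 1 := by
    rw [← natDegree_eq a b n]
    exact (monic a b n).coeff_natDegree
  have hnext : (rodriguesFactor a b n).coeff (2 * n) = -(n * a + (n + 1) * b) := by
    rw [← nextCoeff_eq a b n, nextCoeff_of_natDegree_pos (by rw [natDegree_eq]; omega),
      natDegree_eq, Nat.add_sub_cancel]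
  rw [iterate_derivative_eq_of_natDegree_le_succ (natDegree_eq a b n).le, hlead, hnext,
    Nat.factorial_succ]
  simp only [map_mul, map_add, map_neg, map_natCast, Nat.cast_mul, Nat.cast_add, Nat.cast_one,
    Nat.cast_ofNat, map_one, map_ofNat]
  ring

theorem integral_iterate_derivative_two_mul_mul :
    ∫ t in a..b, (derivative^[2 * n] (rodriguesFactor a b n)).eval t
        * (rodriguesFactor a b n).eval t
      = (-1) ^ n * (2 * (2 * n)! * (n + 1)! ^ 2 / (2 * n + 3)!) * (b - a) ^ (2 * n + 3) := by
  have hpoint : ∀ t, (derivative^[2 * n] (rodriguesFactor a b n)).eval t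
        * (rodriguesFactor a b n).eval t
      = (-1) ^ n * (2 * n)! * ((n + 1) * ((t - a) ^ n * (b - t) ^ (n + 2))
          - n * ((t - a) ^ (n + 1) * (b - t) ^ (n + 1))) := by
    intro t
    rw [iterate_derivative_two_mul]
    simp only [rodriguesFactor, eval_mul, eval_add, eval_pow, eval_sub, eval_C, eval_X]
    rw [show t - b = -(b - t) by ring, neg_pow, neg_pow]
    ring
  simp_rw [hpoint]
  rw [intervalIntegral.integral_const_mul, intervalIntegral.integral_sub
    ((Continuous.intervalIntegrable (by fun_prop) _ _).const_mul _)
    ((Continuous.intervalIntegrable (by fun_prop) _ _).const_mul _),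
    intervalIntegral.integral_const_mul, intervalIntegral.integral_const_mul,
    integral_sub_pow_mul_sub_pow, integral_sub_pow_mul_sub_pow,
    show n + (n + 2) + 1 = 2 * n + 3 by omega, show n + 1 + (n + 1) + 1 = 2 * n + 3 by omega]
  push_cast [Nat.factorial_succ]
  ring

end rodriguesFactor

namespace jumpLift
variable (a b : ℝ) (n : ℕ)

theorem natDegree_le : (jumpLift a b n).natDegree ≤ n + 1 := by
  refine (natDegree_C_mul_le _ _).trans ((natDegree_iterate_derivative _ _).trans ?_)
  rw [rodriguesFactor.natDegree_eq]
  omega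

theorem eval_left {a b : ℝ} (hab : a ≠ b) (n : ℕ) : (jumpLift a b n).eval a = 1 := by
  rw [jumpLift, eval_mul, eval_C, rodriguesFactor.eval_iterate_derivative_left]
  exact inv_mul_cancel₀ (mul_ne_zero (by positivity) (pow_ne_zero _ (sub_ne_zero_of_ne hab)))

theorem eval_right : (jumpLift a b n).eval b = 0 := by
  rw [jumpLift, eval_mul,
    rodriguesFactor.eval_iterate_derivative_right_of_lt a b n n.lt_succ_self, mul_zero]

theorem intervalIntegral_mul_eq_zero {r : ℝ[X]} (hr : derivative^[n] r = 0) :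
    ∫ t in a..b, r.eval t * (jumpLift a b n).eval t = 0 := by
  simp only [jumpLift, eval_mul, eval_C, mul_left_comm (r.eval _)]
  rw [intervalIntegral.integral_const_mul, intervalIntegral_mul_iterate_derivative
    (fun j hj => rodriguesFactor.eval_iterate_derivative_left_of_lt a b n hj)
    (fun j hj => rodriguesFactor.eval_iterate_derivative_right_of_lt a b n (by omega)), hr]
  simp

theorem intervalIntegral_mul_derivative {a b : ℝ} (hab : a ≠ b) {n : ℕ} {r : ℝ[X]}
    (hr : r.natDegree ≤ n) :
    ∫ t in a..b, r.eval t * (jumpLift a b n).derivative.eval t = -r.eval a := by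
  rw [Polynomial.intervalIntegral_mul_derivative, eval_left hab, eval_right,
    intervalIntegral_mul_eq_zero a b n
      (by rw [← Function.iterate_succ_apply]; exact iterate_derivative_eq_zero (by omega))]
  ring

theorem intervalIntegral_sq {a b : ℝ} (hab : a ≠ b) (n : ℕ) :
    ∫ t in a..b, (jumpLift a b n).eval t ^ 2
      = (b - a) * ((n + 1) / ((2 * n + 1) * (2 * n + 3))) := by
  set c : ℝ := (n ! * (a - b) ^ (n + 1))⁻¹ with hc
  have hsq : ∀ t, (jumpLift a b n).eval t ^ 2
      = c * ((jumpLift a b n).eval t * (derivative^[n] (rodriguesFactor a b n)).eval t) := by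
    intro t
    rw [sq]
    nth_rw 2 [jumpLift]
    rw [eval_mul, eval_C]
    ring
  have hder : derivative^[n] (jumpLift a b n)
      = C c * derivative^[2 * n] (rodriguesFactor a b n) := by
    rw [jumpLift, iterate_derivative_C_mul, two_mul, Function.iterate_add_apply]
  simp_rw [hsq]
  rw [intervalIntegral.integral_const_mul, intervalIntegral_mul_iterate_derivative
    (fun j hj => rodriguesFactor.eval_iterate_derivative_left_of_lt a b n hj)
    (fun j hj => rodriguesFactor.eval_iterate_derivative_right_of_lt a b n (by omega)), hder]
  simp only [eval_mul, eval_C, mul_assoc]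
  rw [intervalIntegral.integral_const_mul,
    rodriguesFactor.integral_iterate_derivative_two_mul_mul, hc,
    show a - b = -1 * (b - a) by ring, mul_pow, show 2 * n + 3 = 2 * n + 1 + 1 + 1 by ring]
  have hd : b - a ≠ 0 := sub_ne_zero_of_ne hab.symm
  push_cast [Nat.factorial_succ]
  field_simp
  ring

theorem setIntegral_derivative_mul_inner {X : Type*} [NormedAddCommGroup X]
    [InnerProductSpace ℝ X] {a b : ℝ} (hab : a < b) {n : ℕ} {q : ℝ → X} (hq : IsPolyDeg n q)
    (J : X) :
    ∫ t in Ioc a b, (jumpLift a b n).derivative.eval t * ⟪J, q t⟫_ℝ = -⟪J, q a⟫_ℝ := by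
  obtain ⟨r, hr, hrq⟩ := (hq.map (innerₗ X J)).exists_polynomial
  simp only [innerₗ_apply_apply] at hrq
  rw [← hrq a, ← intervalIntegral_mul_derivative hab.ne hr,
    intervalIntegral.integral_of_le hab.le]
  exact setIntegral_congr_fun measurableSet_Ioc fun t _ => by rw [hrq, mul_comm]

end jumpLift

theorem eqOn_Icc_zero_of_integral_Ioc_norm_sq_eq_zero {X : Type*} [NormedAddCommGroup X]
    {f : ℝ → X} (hf : Continuous f) {a b : ℝ} (hab : a ≠ b)
    (h : ∫ t in Ioc a b, ‖f t‖ ^ 2 = 0) : EqOn f 0 (Icc a b) := by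
  have hae : (fun t => ‖f t‖ ^ 2) =ᵐ[volume.restrict (Ioc a b)] 0 :=
    (integral_eq_zero_iff_of_nonneg (fun t => sq_nonneg _)
      (hf.norm.pow 2).integrableOn_Ioc).mp h
  have hIoc : EqOn f 0 (Ioc a b) := fun t ht => by
    simpa using Measure.eqOn_Ioc_of_ae_eq (μ := volume) hae (by fun_prop) continuousOn_const ht
  rw [← closure_Ioc hab]
  exact hIoc.closure hf continuous_const

theorem eqOn_jumpLift_smul {X : Type*} [NormedAddCommGroup X] [InnerProductSpace ℝ X]
    {a b : ℝ} (hab : a < b) {n : ℕ} {E E' : ℝ → X} {J : X} (hE : IsPolyDeg (n + 1) E)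
    (hE' : ∀ t, HasDerivAt E (E' t) t) (hEa : E a = J)
    (hmom : ∀ q : ℝ → X, IsPolyDeg n q → ∫ t in Ioc a b, ⟪E' t, q t⟫_ℝ = -⟪J, q a⟫_ℝ) :
    EqOn E (fun t => (jumpLift a b n).eval t • J) (Icc a b) := by
  set g := jumpLift a b n
  set D : ℝ → X := fun t => E' t - g.derivative.eval t • J with hD_def
  have hE'poly : IsPolyDeg n E' := hE.of_hasDerivAt hE'
  have hg : g.natDegree ≤ n + 1 := jumpLift.natDegree_le a b n
  have hD : IsPolyDeg n D :=
    hE'poly.sub (isPolyDeg_eval_smul ((natDegree_derivative_le g).trans (by omega)) J)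
  have hi1 : IntegrableOn (fun t => ⟪E' t, D t⟫_ℝ) (Ioc a b) :=
    (hE'poly.continuous.inner hD.continuous).integrableOn_Ioc
  have hi2 : IntegrableOn (fun t => g.derivative.eval t * ⟪J, D t⟫_ℝ) (Ioc a b) :=
    (g.derivative.continuous.mul (continuous_const.inner hD.continuous)).integrableOn_Ioc
  have hnorm : ∫ t in Ioc a b, ‖D t‖ ^ 2 = 0 :=
    calc ∫ t in Ioc a b, ‖D t‖ ^ 2
        = ∫ t in Ioc a b, (⟪E' t, D t⟫_ℝ - g.derivative.eval t * ⟪J, D t⟫_ℝ) := by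
          congr 1; ext t
          rw [← real_inner_self_eq_norm_sq]
          nth_rw 1 [hD_def]
          rw [inner_sub_left, real_inner_smul_left]
      _ = (∫ t in Ioc a b, ⟪E' t, D t⟫_ℝ)
            - ∫ t in Ioc a b, g.derivative.eval t * ⟪J, D t⟫_ℝ := integral_sub hi1 hi2
      _ = 0 := by rw [hmom D hD, jumpLift.setIntegral_derivative_mul_inner hab hD]; ring
  have hD0 := eqOn_Icc_zero_of_integral_Ioc_norm_sq_eq_zero hD.continuous hab.ne hnorm
  have hconst := constant_of_has_deriv_right_zero (a := a) (b := b)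
    (f := fun t => E t - g.eval t • J)
    (hE.continuous.sub (g.continuous.smul continuous_const)).continuousOn
    fun t ht => by
      simpa [D, hD0 (Ico_subset_Icc_self ht)] using
        ((hE' t).fun_sub ((g.hasDerivAt t).smul_const J)).hasDerivWithinAt (s := Ici t)
  intro t ht
  have := hconst t ht
  rwa [hEa, jumpLift.eval_left hab.ne, one_smul, sub_self, sub_eq_zero] at this

theorem reconstruction_derivative_L2_identity_general
    {X : Type} [NormedAddCommGroup X] [InnerProductSpace ℝ X]
    (p : ℕ) (a b : ℝ) (hab : a < b)
    (V V' V'' Vh Vh' Vh'' : ℝ → X) (J : X)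
    (hVpoly : IsPolyDeg p V) (hVhpoly : IsPolyDeg (p + 1) Vh)
    (hV' : ∀ t, HasDerivAt V (V' t) t) (hV'' : ∀ t, HasDerivAt V' (V'' t) t)
    (hVh' : ∀ t, HasDerivAt Vh (Vh' t) t) (hVh'' : ∀ t, HasDerivAt Vh' (Vh'' t) t)
    (hmom : ∀ q : ℝ → X, IsPolyDeg (p - 1) q →
      ∫ t in Set.Ioc a b, (inner ℝ (Vh'' t) (q t) : ℝ)
        = (∫ t in Set.Ioc a b, (inner ℝ (V'' t) (q t) : ℝ)) + (inner ℝ J (q a) : ℝ))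
    (hinit' : Vh' a = V' a - J)
    (hp : 2 ≤ p) :
    ∫ t in Set.Ioc a b, ‖V' t - Vh' t‖ ^ 2
      = (b - a) * ((p : ℝ) / ((2 * (p:ℝ) - 1) * (2 * (p:ℝ) + 1))) * ‖J‖ ^ 2 := by
  obtain ⟨n, rfl⟩ : ∃ n, p = n + 2 := ⟨p - 2, by omega⟩
  have hV'poly := hVpoly.of_hasDerivAt hV'
  have hVh'poly := hVhpoly.of_hasDerivAt hVh'
  have hV''c := (hV'poly.of_hasDerivAt hV'').continuous
  have hVh''c := (hVh'poly.of_hasDerivAt hVh'').continuous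
  have hE := eqOn_jumpLift_smul hab ((hV'poly.mono (by omega)).sub hVh'poly)
    (fun t => (hV'' t).sub (hVh'' t)) (by rw [hinit', sub_sub_cancel]) fun q hq => by
      rw [← sub_eq_zero]
      simp_rw [inner_sub_left]
      rw [integral_sub (hV''c.inner hq.continuous).integrableOn_Ioc
        (hVh''c.inner hq.continuous).integrableOn_Ioc, hmom q (by simpa using hq)]
      ring
  calc ∫ t in Ioc a b, ‖V' t - Vh' t‖ ^ 2
      = ∫ t in Ioc a b, (jumpLift a b (n + 1)).eval t ^ 2 * ‖J‖ ^ 2 :=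
        setIntegral_congr_fun measurableSet_Ioc fun t ht => by
          rw [show V' t - Vh' t = _ from hE (Ioc_subset_Icc_self ht), norm_smul, mul_pow,
            Real.norm_eq_abs, sq_abs]
    _ = (∫ t in a..b, (jumpLift a b (n + 1)).eval t ^ 2) * ‖J‖ ^ 2 := by
        rw [integral_mul_const, intervalIntegral.integral_of_le hab.le]
    _ = _ := by
        rw [jumpLift.intervalIntegral_sq hab.ne]
        push_cast
        ring

/-- Exact identity for the derivative of the reconstruction error:
`‖(V - V̂)'‖²_{L²} = τₙ p/((2p-1)(2p+1)) ‖J‖²`. -/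
theorem reconstruction_derivative_L2_identity
    {X : Type} [NormedAddCommGroup X] [InnerProductSpace ℝ X] [CompleteSpace X]
    (p : ℕ) (a b : ℝ) (hab : a < b)
    (V V' V'' Vh Vh' Vh'' : ℝ → X) (J : X)
    (hVpoly : IsPolyDeg p V) (hVhpoly : IsPolyDeg (p + 1) Vh)
    (hV' : ∀ t, HasDerivAt V (V' t) t) (hV'' : ∀ t, HasDerivAt V' (V'' t) t)
    (hVh' : ∀ t, HasDerivAt Vh (Vh' t) t) (hVh'' : ∀ t, HasDerivAt Vh' (Vh'' t) t)
    (hmom : ∀ q : ℝ → X, IsPolyDeg (p - 1) q →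
      ∫ t in Set.Ioc a b, (inner ℝ (Vh'' t) (q t) : ℝ)
        = (∫ t in Set.Ioc a b, (inner ℝ (V'' t) (q t) : ℝ)) + (inner ℝ J (q a) : ℝ))
    (hinit : Vh a = V a) (hinit' : Vh' a = V' a - J)
    (hp : 2 ≤ p) :
    ∫ t in Set.Ioc a b, ‖V' t - Vh' t‖ ^ 2
      = (b - a) * ((p : ℝ) / ((2 * (p:ℝ) - 1) * (2 * (p:ℝ) + 1))) * ‖J‖ ^ 2 :=
  reconstruction_derivative_L2_identity_general p a b hab V V' V'' Vh Vh' Vh'' J hVpoly hVhpoly hV'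
    hV'' hVh' hVh'' hmom hinit' hp
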